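/- arXiv:2511.14665 — 2 statements merged into one kernel-verified Lean document; each statement's English description precedes it below -/
import Mathlib

section
/- For every total computable function Solved : ℕ → Bool there exist infinitely many codes e satisfying the diagonal fixed-point condition 'e is self-halting if and only if Solved e = false'; i.e., the set {e : ℕ | (e is self-halting) ↔ (Solved e = false)} is infinite. -/
/-- For `e : ℕ`, the `e`-th partial computable function applied to `e` itself;
`e` is *self-halting* iff this is defined (`.Dom`). -/
def SelfHalting (e : ℕ) : Prop := ((Denumerable.ofNat Nat.Partrec.Code e).eval e).Dom

private lemma list_mem_computable (l : List ℕ) :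
    Computable fun e : ℕ => decide (e ∈ l) := by
  induction l with
  | nil => simpa using Computable.const false
  | cons a l ih =>
    have h1 : Computable fun e : ℕ => decide (e = a) :=
      (Primrec.eq.comp Primrec.id (Primrec.const a)).decide.to_comp
    have : Computable fun e : ℕ => (decide (e = a) || decide (e ∈ l)) := by
      have := Computable.cond h1 (Computable.const true) ih
      exact this.of_eq fun e => by cases h : decide (e = a) <;> simp [h]
    exact this.of_eq fun e => by simp [List.mem_cons, Bool.or_comm, Bool.decide_or]

private lemma exists_fixed_point (g : ℕ → Bool) (hg : Computable g) :
    ∃ e : ℕ, SelfHalting e ↔ g e = false := by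
  have hf : Partrec₂ fun (c : Nat.Partrec.Code) (_ : ℕ) =>
      cond (g (Encodable.encode c)) Part.none (Part.some 0) := by
    have hc : Computable fun p : Nat.Partrec.Code × ℕ => g (Encodable.encode p.1) :=
      hg.comp (Computable.encode.comp Computable.fst)
    exact Partrec.cond hc Partrec.none (Computable.const 0).partrec
  obtain ⟨c, hc⟩ := Nat.Partrec.Code.fixed_point₂ hf
  refine ⟨Encodable.encode c, ?_⟩
  have : (Denumerable.ofNat Nat.Partrec.Code (Encodable.encode c)) = c := by simp
  unfold SelfHalting
  rw [this, hc]
  cases h : g (Encodable.encode c) <;> simp [h]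

/-- **Multiplicity of Nested Fixed Points.** For every total computable
classifier there are infinitely many diagonal fixed points: codes `e` that are
self-halting iff classified `false` ("Unsolvable"). -/
theorem diagonal_fixed_points_infinite
    (Solved : ℕ → Bool) (hS : Computable Solved) :
    {e : ℕ | SelfHalting e ↔ Solved e = false}.Infinite := by
  by_contra h
  rw [Set.not_infinite] at h
  classical
  set F : Finset ℕ := h.toFinset with hF
  have hmem : ∀ e, e ∈ F ↔ (SelfHalting e ↔ Solved e = false) := by
    intro e; rw [hF, Set.Finite.mem_toFinset]; rfl
  set g : ℕ → Bool := fun e => if e ∈ F.val.toList then !Solved e else Solved e with hg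
  have hgc : Computable g := by
    have hm := list_mem_computable F.val.toList
    have hnot : Computable fun e => !Solved e :=
      (Computable.cond hS (Computable.const false) (Computable.const true)).of_eq
        fun e => by cases h : Solved e <;> simp [h]
    refine (Computable.cond hm hnot hS).of_eq fun e => ?_
    by_cases he : e ∈ F.val.toList
    · simp only [hg]; rw [if_pos he]
      simp [he]
    · simp only [hg]; rw [if_neg he]
      simp [he]
  obtain ⟨e, he⟩ := exists_fixed_point g hgc
  have hFl : ∀ x : ℕ, x ∈ F.val.toList ↔ x ∈ F := by
    intro x; rw [Multiset.mem_toList]; exact Iff.rfl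
  by_cases heF : e ∈ F
  · have hge : g e = !Solved e := by simp only [hg]; rw [if_pos ((hFl e).2 heF)]
    have h1 := (hmem e).1 heF
    rw [hge] at he
    cases h2 : Solved e
    · have := he.1 (h1.2 h2); rw [h2] at this; simp at this
    · have := h1.1 (he.2 (by rw [h2]; rfl)); rw [h2] at this; simp at this
  · have hge : g e = Solved e := by
      simp only [hg]; rw [if_neg (fun hx => heF ((hFl e).1 hx))]
    rw [hge] at he
    exact heF ((hmem e).2 he)
end

section
/- For every computable function f : ℕ → ℕ acting on codes, the set of codes c such that φ_{f c} = φ_c (the code transformation f has c as an extensional fixed point) is infinite. -/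
open Nat.Partrec (Code)
open Nat.Partrec.Code

private lemma patch_computable (f b : ℕ → ℕ) (hf : Computable f) :
    ∀ l : List ℕ, Computable (fun c => if c ∈ l then b c else f c)
  | [] => by simpa using hf
  | a :: l => by
    have ih := patch_computable f b hf l
    have : Computable (fun c => bif c == a then b a else
        (if c ∈ l then b c else f c)) :=
      Computable.cond (Primrec.to_comp (Primrec.beq.comp .id (Primrec.const a)))
        (Computable.const _) ih
    refine this.of_eq fun c => ?_
    by_cases h : c = a <;> simp [h]

/-- **Proliferation (recursion-theorem form).** Every computable code
transformation has infinitely many extensional fixed points: codes `c` with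
`φ_{f c} = φ_c`. -/
theorem extensional_fixed_points_infinite
    (f : ℕ → ℕ) (hf : Computable f) :
    {c : ℕ | (Denumerable.ofNat Nat.Partrec.Code (f c)).eval
        = (Denumerable.ofNat Nat.Partrec.Code c).eval}.Infinite := by
  classical
  set S := {c : ℕ | (Denumerable.ofNat Nat.Partrec.Code (f c)).eval
      = (Denumerable.ofNat Nat.Partrec.Code c).eval} with hS
  by_contra hfin
  rw [Set.not_infinite] at hfin
  set l := hfin.toFinset.toList with hl
  have hmem : ∀ c, c ∈ S ↔ c ∈ l := by
    intro c
    rw [hl, Finset.mem_toList, Set.Finite.mem_toFinset]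
  -- "bad" code: a code whose eval differs from that of `c`
  set bad : ℕ → ℕ := fun c =>
    if (Denumerable.ofNat Code c).eval = (Code.const 0).eval
    then Encodable.encode (Code.const 1) else Encodable.encode (Code.const 0)
    with hbad
  have hbad_ne : ∀ c, (Denumerable.ofNat Code (bad c)).eval
      ≠ (Denumerable.ofNat Code c).eval := by
    intro c h
    rw [hbad] at h
    by_cases h0 : (Denumerable.ofNat Code c).eval = (Code.const 0).eval
    · simp only [h0, if_pos] at h
      rw [Denumerable.ofNat_encode] at h
      have := congrArg (fun g => g 0) h
      simp [eval_const] at this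
    · simp only [h0, if_neg, not_false_iff] at h
      rw [Denumerable.ofNat_encode] at h
      exact h0 h.symm
  set g : ℕ → ℕ := fun c => if c ∈ l then bad c else f c with hg
  have hgc : Computable g := patch_computable f bad hf l
  have hFc : Computable (fun c : Code => Denumerable.ofNat Code (g (Encodable.encode c))) :=
    (Computable.ofNat Code).comp (hgc.comp Computable.encode)
  obtain ⟨c, hc⟩ := Nat.Partrec.Code.fixed_point hFc
  set n := Encodable.encode c with hn
  have hofn : Denumerable.ofNat Code n = c := Denumerable.ofNat_encode c
  by_cases hin : n ∈ l
  · have : g n = bad n := by rw [hg]; simp [hin]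
    refine hbad_ne n ?_
    rw [hofn, ← this]
    exact hc
  · have hgn : g n = f n := by rw [hg]; simp [hin]
    have : n ∈ S := by
      rw [hS]
      show (Denumerable.ofNat Code (f n)).eval = (Denumerable.ofNat Code n).eval
      rw [← hgn, hofn]; exact hc
    exact hin ((hmem n).1 this)
end
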